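/- arXiv:1204.0505 — 2 statements merged into one kernel-verified Lean document; each statement's English description precedes it below -/
import Mathlib

section
/- Let θ₀, θ₁, θ₂ ∈ (0,π) satisfy θ₀ + θ₁ + θ₂ = 2π, and set pᵢ = p_{θᵢ} where p_θ/(1-p_θ) = sin((π-θ)/3)/sin(θ/3). Then p₀ + p₁ + p₂ − p₀p₁p₂ = 1. -/
open Real Set

lemma key_trig (x y : ℝ) :
    Real.sin (π/3 - x) * Real.sin (π/3 - y) * Real.sin (x + y) =
      Real.sin x * Real.sin y * Real.sin (π/3 - (x + y))
      + Real.sin (π/3 - x) * Real.sin y * Real.sin (π/3 - (x + y))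
      + Real.sin x * Real.sin (π/3 - y) * Real.sin (π/3 - (x + y))
      + Real.sin x * Real.sin y * Real.sin (x + y) := by
  simp only [Real.sin_sub, Real.cos_sub, Real.sin_add, Real.cos_add,
    Real.sin_pi_div_three, Real.cos_pi_div_three]
  have px : Real.sin x ^ 2 + Real.cos x ^ 2 = 1 := Real.sin_sq_add_cos_sq x
  have py : Real.sin y ^ 2 + Real.cos y ^ 2 = 1 := Real.sin_sq_add_cos_sq y
  have pr : Real.sqrt 3 ^ 2 = 3 := Real.sq_sqrt (by norm_num)
  set sx := Real.sin x; set cx := Real.cos x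
  set sy := Real.sin y; set cy := Real.cos y
  set r := Real.sqrt 3
  linear_combination ((r^2/4 - 3/4) * sy * cy) * px + ((r^2/4 - 3/4) * sx * cx) * py
    + ((sx * cx * (1 - cy^2) + sy * cy * (1 - cx^2)) / 4) * pr

/-- If `θ₀, θ₁, θ₂ ∈ (0,π)` satisfy `θ₀ + θ₁ + θ₂ = 2π`, and `pᵢ = p_{θᵢ}`
where `p_θ/(1-p_θ) = sin((π-θ)/3)/sin(θ/3)`, then `p₀ + p₁ + p₂ − p₀p₁p₂ = 1`. -/
theorem star_triangle_criticality
    (p : ℝ → ℝ)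
    (hp : ∀ θ ∈ Ioo (0 : ℝ) π,
      p θ ∈ Ioo (0 : ℝ) 1 ∧
      p θ / (1 - p θ) = Real.sin ((π - θ) / 3) / Real.sin (θ / 3))
    (θ₀ θ₁ θ₂ : ℝ) (h₀ : θ₀ ∈ Ioo (0 : ℝ) π) (h₁ : θ₁ ∈ Ioo (0 : ℝ) π)
    (h₂ : θ₂ ∈ Ioo (0 : ℝ) π) (hsum : θ₀ + θ₁ + θ₂ = 2 * π) :
    p θ₀ + p θ₁ + p θ₂ - p θ₀ * p θ₁ * p θ₂ = 1 := by
  have hπ := Real.pi_pos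
  -- For each θᵢ, get p θᵢ = b/(a+b) where a = sin(θ/3), b = sin((π-θ)/3)
  have main : ∀ θ ∈ Ioo (0 : ℝ) π,
      0 < Real.sin (θ/3) ∧ 0 < Real.sin ((π - θ)/3) ∧
      p θ = Real.sin ((π - θ)/3) / (Real.sin (θ/3) + Real.sin ((π - θ)/3)) := by
    intro θ hθ
    obtain ⟨⟨hp0, hp1⟩, hratio⟩ := hp θ hθ
    obtain ⟨hθ0, hθπ⟩ := hθ
    have ha : 0 < Real.sin (θ/3) := Real.sin_pos_of_pos_of_lt_pi (by linarith) (by linarith)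
    have hb : 0 < Real.sin ((π - θ)/3) :=
      Real.sin_pos_of_pos_of_lt_pi (by linarith) (by linarith)
    refine ⟨ha, hb, ?_⟩
    have h1p : (1 : ℝ) - p θ ≠ 0 := by linarith
    have key : p θ * Real.sin (θ/3) = Real.sin ((π - θ)/3) * (1 - p θ) := by
      field_simp at hratio
      linarith [hratio]
    have hab : Real.sin (θ/3) + Real.sin ((π - θ)/3) ≠ 0 := by positivity
    field_simp
    linarith [key]
  obtain ⟨ha0, hb0, he0⟩ := main θ₀ h₀
  obtain ⟨ha1, hb1, he1⟩ := main θ₁ h₁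
  obtain ⟨ha2, hb2, he2⟩ := main θ₂ h₂
  set a0 := Real.sin (θ₀/3); set b0 := Real.sin ((π - θ₀)/3)
  set a1 := Real.sin (θ₁/3); set b1 := Real.sin ((π - θ₁)/3)
  set a2 := Real.sin (θ₂/3); set b2 := Real.sin ((π - θ₂)/3)
  -- The key trig identity: a0*a1*a2 = b0*b1*b2 + a0*b1*b2 + b0*a1*b2 + b0*b1*a2
  have hid : a0 * a1 * a2 = b0 * b1 * b2 + a0 * b1 * b2 + b0 * a1 * b2 + b0 * b1 * a2 := by
    have hx : (π - θ₁)/3 + (π - θ₂)/3 = θ₀/3 := by linarith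
    have e0 : a0 = Real.sin ((π - θ₁)/3 + (π - θ₂)/3) := by rw [hx]
    have e1 : a1 = Real.sin (π/3 - (π - θ₁)/3) := by
      show Real.sin (θ₁/3) = _; ring_nf
    have e2 : a2 = Real.sin (π/3 - (π - θ₂)/3) := by
      show Real.sin (θ₂/3) = _; ring_nf
    have e3 : b0 = Real.sin (π/3 - ((π - θ₁)/3 + (π - θ₂)/3)) := by
      show Real.sin ((π - θ₀)/3) = _
      congr 1
      linarith
    rw [e0, e1, e2, e3]
    linarith [key_trig ((π - θ₁)/3) ((π - θ₂)/3)]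
  rw [he0, he1, he2]
  have h0' : a0 + b0 ≠ 0 := by positivity
  have h1' : a1 + b1 ≠ 0 := by positivity
  have h2' : a2 + b2 ≠ 0 := by positivity
  field_simp
  linear_combination (-1) * hid
end

section
/- Suppose ranges H^k and X^k satisfy: H^{k+1}_n ≤ max{C(H^k)_n, H^k_n + Y^k_n} and X^{k+1}_n = max{X^k_{n−1}, X^k_n + Y^k_n, X^k_{n+1}} for the same values Y^k_n ∈ {0,1}, with X^0 regular and X^0 ≥ H^0 pointwise. Then X^k ≥ H^k pointwise for all k ≥ 0. -/
open Set

/-- The mountain at `(n, r)`: `M(n,r)_l = r − |n−l| + 1` for `l ≠ n`, and `M(n,r)_n = r`. -/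
noncomputable def mountain (n : ℤ) (r : EReal) (l : ℤ) : EReal :=
  if l = n then r else r + (((1 - |n - l| : ℤ) : ℝ) : EReal)

/-- The covering of a range `R`: the pointwise maximum of the mountains `M(n, R_n)`. -/
noncomputable def cover (R : ℤ → EReal) (l : ℤ) : EReal :=
  ⨆ n : ℤ, mountain n (R n) l

/-- A range is regular if successive entries differ by at most `1`. -/
def RegularRange (R : ℤ → EReal) : Prop :=
  ∀ n : ℤ, R n ≤ R (n + 1) + 1 ∧ R (n + 1) ≤ R n + 1

lemma reg_forward (X : ℤ → EReal) (hreg : RegularRange X) (d : ℕ) (l : ℤ) :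
    X (l + d) ≤ X l + ((d : ℝ) : EReal) := by
  induction d with
  | zero => simp
  | succ d ih =>
    have e : l + ((d + 1 : ℕ) : ℤ) = (l + d) + 1 := by push_cast; ring
    calc X (l + ((d + 1 : ℕ) : ℤ)) = X ((l + d) + 1) := by rw [e]
      _ ≤ X (l + d) + 1 := (hreg (l + d)).2
      _ ≤ (X l + ((d : ℝ) : EReal)) + 1 := add_le_add_left ih 1
      _ = X l + (((d + 1 : ℕ) : ℝ) : EReal) := by rw [add_assoc]; norm_cast

lemma reg_backward (X : ℤ → EReal) (hreg : RegularRange X) (d : ℕ) (l : ℤ) :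
    X (l - d) ≤ X l + ((d : ℝ) : EReal) := by
  induction d with
  | zero => simp
  | succ d ih =>
    have e : l - ((d + 1 : ℕ) : ℤ) = (l - d) - 1 := by push_cast; ring
    have h := (hreg ((l - d) - 1)).1
    rw [sub_add_cancel] at h
    calc X (l - ((d + 1 : ℕ) : ℤ)) = X ((l - d) - 1) := by rw [e]
      _ ≤ X (l - d) + 1 := h
      _ ≤ (X l + ((d : ℝ) : EReal)) + 1 := add_le_add_left ih 1
      _ = X l + (((d + 1 : ℕ) : ℝ) : EReal) := by rw [add_assoc]; norm_cast

lemma mountain_le_of_regular (X : ℤ → EReal) (hreg : RegularRange X) (m l : ℤ) :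
    mountain m (X m) l ≤ max (X (l - 1)) (max (X l) (X (l + 1))) := by
  rcases lt_trichotomy m l with h | h | h
  · refine le_trans ?_ (le_max_left _ _)
    set d : ℕ := (l - 1 - m).toNat with hdd
    have hd : (d : ℤ) = l - 1 - m := Int.toNat_of_nonneg (by omega)
    have habs : (1 - |m - l| : ℤ) = -(d : ℤ) := by
      rw [abs_of_neg (show m - l < 0 by omega)]; omega
    have hm : m = (l - 1) - (d : ℤ) := by omega
    have h1 : X m ≤ X (l - 1) + ((d : ℝ) : EReal) := by
      rw [hm]; exact reg_backward X hreg d (l - 1)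
    rw [mountain, if_neg (by omega : ¬ l = m), habs]
    calc X m + (((-(d : ℤ) : ℤ) : ℝ) : EReal)
        ≤ (X (l - 1) + ((d : ℝ) : EReal)) + (((-(d : ℤ) : ℤ) : ℝ) : EReal) :=
          add_le_add_left h1 _
      _ = X (l - 1) := by rw [add_assoc, ← EReal.coe_add]; norm_num
  · subst h
    rw [mountain, if_pos rfl]
    exact le_trans (le_max_left _ _) (le_max_right _ _)
  · refine le_trans ?_ (le_trans (le_max_right _ _) (le_max_right _ _))
    set d : ℕ := (m - (l + 1)).toNat with hdd
    have hd : (d : ℤ) = m - (l + 1) := Int.toNat_of_nonneg (by omega)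
    have habs : (1 - |m - l| : ℤ) = -(d : ℤ) := by
      rw [abs_of_pos (show 0 < m - l by omega)]; omega
    have hm : m = (l + 1) + (d : ℤ) := by omega
    have h1 : X m ≤ X (l + 1) + ((d : ℝ) : EReal) := by
      rw [hm]; exact reg_forward X hreg d (l + 1)
    rw [mountain, if_neg (by omega : ¬ l = m), habs]
    calc X m + (((-(d : ℤ) : ℤ) : ℝ) : EReal)
        ≤ (X (l + 1) + ((d : ℝ) : EReal)) + (((-(d : ℤ) : ℤ) : ℝ) : EReal) :=
          add_le_add_left h1 _
      _ = X (l + 1) := by rw [add_assoc, ← EReal.coe_add]; norm_num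

lemma cover_mono {A B : ℤ → EReal} (h : ∀ n, A n ≤ B n) (l : ℤ) :
    cover A l ≤ cover B l := by
  refine iSup_le fun n => le_iSup_of_le n ?_
  unfold mountain
  split
  · exact h n
  · exact add_le_add_left (h n) _

lemma cover_le_of_regular (X : ℤ → EReal) (hreg : RegularRange X) (l : ℤ) :
    cover X l ≤ max (X (l - 1)) (max (X l) (X (l + 1))) :=
  iSup_le fun m => mountain_le_of_regular X hreg m l

lemma reg_step (X X' : ℤ → EReal) (Y : ℤ → ℤ) (hY : ∀ n, Y n = 0 ∨ Y n = 1)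
    (hX' : ∀ n, X' n = max (max (X (n - 1)) (X n + ((Y n : ℝ) : EReal))) (X (n + 1)))
    (hreg : RegularRange X) : RegularRange X' := by
  have hY1 : ∀ n, ((Y n : ℝ) : EReal) ≤ 1 := by
    intro n; rcases hY n with h | h <;> simp [h]
  have hY0 : ∀ n, (0 : EReal) ≤ ((Y n : ℝ) : EReal) := by
    intro n; rcases hY n with h | h <;> simp [h]
  have hle : ∀ n, X n ≤ X' n := fun n => by
    rw [hX' n]
    exact le_trans (le_add_of_nonneg_right (hY0 n)) (le_max_of_le_left (le_max_right _ _))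
  have hle' : ∀ n, X (n - 1) ≤ X' n := fun n => by
    rw [hX' n]; exact le_max_of_le_left (le_max_left _ _)
  have hle'' : ∀ n, X (n + 1) ≤ X' n := fun n => by
    rw [hX' n]; exact le_max_right _ _
  have selfle : ∀ a : EReal, a ≤ a + 1 := fun a =>
    le_add_of_nonneg_right zero_le_one
  intro n
  constructor
  · rw [hX' n]
    have hXn : X n ≤ X' (n + 1) := by
      have := hle' (n + 1); rwa [add_sub_cancel_right] at this
    refine max_le (max_le ?_ ?_) ?_
    · have h1 : X (n - 1) ≤ X n + 1 := by
        have := (hreg (n - 1)).1; rwa [sub_add_cancel] at this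
      exact le_trans h1 (add_le_add_left hXn 1)
    · exact le_trans (add_le_add_right (hY1 n) _) (add_le_add_left hXn 1)
    · exact le_trans (hle (n + 1)) (selfle _)
  · rw [hX' (n + 1)]
    have hXn1 : X (n + 1) ≤ X' n := hle'' n
    refine max_le (max_le ?_ ?_) ?_
    · rw [add_sub_cancel_right]
      exact le_trans (hle n) (selfle _)
    · exact le_trans (add_le_add_right (hY1 (n + 1)) _) (add_le_add_left hXn1 1)
    · exact le_trans (hreg (n + 1)).2 (add_le_add_left hXn1 1)


/-- if `H^{k+1}_n ≤ max{C(H^k)_n, H^k_n + Y^k_n}` and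
`X^{k+1}_n = max{X^k_{n−1}, X^k_n + Y^k_n, X^k_{n+1}}` with the same `Y^k_n ∈ {0,1}`,
`X^0` regular and `X^0 ≥ H^0` pointwise, then `X^k ≥ H^k` pointwise for all `k`. -/
theorem growth_process_domination
    (H X : ℕ → ℤ → EReal) (Y : ℕ → ℤ → ℤ)
    (hY : ∀ k n, Y k n = 0 ∨ Y k n = 1)
    (hH : ∀ k n, H (k + 1) n ≤ max (cover (H k) n) (H k n + ((Y k n : ℝ) : EReal)))
    (hX : ∀ k n, X (k + 1) n
      = max (max (X k (n - 1)) (X k n + ((Y k n : ℝ) : EReal))) (X k (n + 1)))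
    (hreg0 : RegularRange (X 0))
    (h0 : ∀ n, H 0 n ≤ X 0 n) :
    ∀ k n, H k n ≤ X k n := by
  have hregs : ∀ k, RegularRange (X k) := by
    intro k; induction k with
    | zero => exact hreg0
    | succ k ih => exact reg_step (X k) (X (k + 1)) (Y k) (hY k) (hX k) ih
  intro k
  induction k with
  | zero => exact h0
  | succ k ih =>
    intro n
    have hY0 : (0 : EReal) ≤ ((Y k n : ℝ) : EReal) := by
      rcases hY k n with h | h <;> simp [h]
    refine le_trans (hH k n) (max_le ?_ ?_)
    · refine le_trans (cover_mono ih n) (le_trans (cover_le_of_regular (X k) (hregs k) n) ?_)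
      rw [hX k n]
      refine max_le (le_max_of_le_left (le_max_left _ _)) (max_le ?_ (le_max_right _ _))
      exact le_max_of_le_left (le_trans (le_add_of_nonneg_right hY0) (le_max_right _ _))
    · rw [hX k n]
      exact le_max_of_le_left (le_trans (add_le_add_left (ih n) _) (le_max_right _ _))
end
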